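/- arXiv:1408.5817 — 2 statements merged into one kernel-verified Lean document; each statement's English description precedes it below -/
import Mathlib

section
/- Let K be a field, let q ∈ K be nonzero, and let z ∈ K. For all n ≥ 1, Σ_{σ∈𝔖_n} q^{maj(σ)} · Π_{j=1}^{des(σ)} (1 + z·q^{−j}) = Σ_{k=1}^{n} [k]_q! · S_{n,k}(q) · z^{n−k}. -/
open Finset

/-- One-line notation: `oneline σ i` is the value σ_i ∈ {1,…,n} at position i ∈ {1,…,n}. -/
def oneline {n : ℕ} (σ : Equiv.Perm (Fin n)) (i : ℕ) : ℕ :=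
  if h : 1 ≤ i ∧ i ≤ n then (σ ⟨i - 1, by omega⟩ : ℕ) + 1 else 0

/-- The descent set Des(σ) = {i ∈ {1,…,n−1} : σ_i > σ_{i+1}}. -/
def DesSet {n : ℕ} (σ : Equiv.Perm (Fin n)) : Finset ℕ :=
  (Finset.Icc 1 (n - 1)).filter fun i => oneline σ (i + 1) < oneline σ i

/-- The ascent set Asc(σ) = {i ∈ {1,…,n−1} : σ_i < σ_{i+1}}. -/
def AscSet {n : ℕ} (σ : Equiv.Perm (Fin n)) : Finset ℕ :=
  (Finset.Icc 1 (n - 1)).filter fun i => oneline σ i < oneline σ (i + 1)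

/-- maj(σ) = Σ_{i ∈ Des(σ)} i. -/
def majNum {n : ℕ} (σ : Equiv.Perm (Fin n)) : ℕ := ∑ i ∈ DesSet σ, i

/-- des(σ) = |Des(σ)|. -/
def desNum {n : ℕ} (σ : Equiv.Perm (Fin n)) : ℕ := (DesSet σ).card

/-- inv(σ) = #{(i,j) : 1 ≤ i < j ≤ n, σ_i > σ_j}. -/
def invNum {n : ℕ} (σ : Equiv.Perm (Fin n)) : ℕ :=
  ((Finset.Icc 1 n ×ˢ Finset.Icc 1 n).filter fun p =>
    p.1 < p.2 ∧ oneline σ p.2 < oneline σ p.1).card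

/-- coinv(σ) = #{(i,j) : 1 ≤ i < j ≤ n, σ_i < σ_j}. -/
def coinvNum {n : ℕ} (σ : Equiv.Perm (Fin n)) : ℕ :=
  ((Finset.Icc 1 n ×ˢ Finset.Icc 1 n).filter fun p =>
    p.1 < p.2 ∧ oneline σ p.1 < oneline σ p.2).card

/-- inv^{□,j}(σ) = #{i : 1 ≤ i < j, σ_i > σ_j}, inversions ending at position j. -/
def invEnd {n : ℕ} (σ : Equiv.Perm (Fin n)) (j : ℕ) : ℕ :=
  ((Finset.Icc 1 n).filter fun i => i < j ∧ oneline σ j < oneline σ i).card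

/-- inv^{i,□}(σ) = #{j : i < j ≤ n, σ_i > σ_j}, inversions starting at position i. -/
def invStart {n : ℕ} (σ : Equiv.Perm (Fin n)) (i : ℕ) : ℕ :=
  ((Finset.Icc 1 n).filter fun j => i < j ∧ oneline σ j < oneline σ i).card

/-- [m]_q = 1 + q + ⋯ + q^{m−1}. -/
def qnum {R : Type*} [CommRing R] (q : R) (m : ℕ) : R := ∑ i ∈ Finset.range m, q ^ i

/-- [m]_q! = [1]_q [2]_q ⋯ [m]_q, with [0]_q! = 1. -/
def qfact {R : Type*} [CommRing R] (q : R) (m : ℕ) : R := ∏ i ∈ Finset.range m, qnum q (i + 1)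

/-- q-Stirling numbers: S_{0,0}(q)=1, S_{n,k}(q)=0 for k<0 or k>n, and
S_{n+1,k}(q) = S_{n,k−1}(q) + [k]_q S_{n,k}(q). -/
def qStirling {R : Type*} [CommRing R] (q : R) : ℕ → ℕ → R
  | 0, 0 => 1
  | 0, _ + 1 => 0
  | _ + 1, 0 => 0
  | n + 1, k + 1 => qStirling q n k + qnum q (k + 1) * qStirling q n (k + 1)

/-- The set of star-sets of size k inside a given finite set (e.g. the descent set). -/
def starSets (D : Finset ℕ) (k : ℕ) : Finset (Finset ℕ) :=
  D.powerset.filter fun S => S.card = k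

/-- inv((σ,S)) = inv(σ) − Σ_{i∈S} (1 + inv^{□,i}(σ)) for a descent-starred permutation. -/
def starInv {n : ℕ} (σ : Equiv.Perm (Fin n)) (S : Finset ℕ) : ℕ :=
  invNum σ - ∑ i ∈ S, (1 + invEnd σ i)

/-- maj((σ,S)) = maj(σ) − Σ_{i∈S} |Des(σ) ∩ {i,…,n−1}| for a descent-starred permutation. -/
def starMaj {n : ℕ} (σ : Equiv.Perm (Fin n)) (S : Finset ℕ) : ℕ :=
  majNum σ - ∑ i ∈ S, (DesSet σ ∩ Finset.Icc i (n - 1)).card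

/-- Gaussian binomial coefficients: binom_q(m,0)=1, binom_q(m,r)=0 for r>m, and
binom_q(m,r) = binom_q(m−1,r−1) + q^r · binom_q(m−1,r). -/
def qbinom {R : Type*} [CommRing R] (q : R) : ℕ → ℕ → R
  | _, 0 => 1
  | 0, _ + 1 => 0
  | m + 1, r + 1 => qbinom q m r + q ^ (r + 1) * qbinom q m (r + 1)

/-- A_{n,j}(q) = Σ_{σ ∈ 𝔖_n, des(σ)=j} q^{maj(σ)}. -/
def eulerA {R : Type*} [CommRing R] (q : R) (n j : ℕ) : R :=
  ∑ σ ∈ (Finset.univ : Finset (Equiv.Perm (Fin n))).filter (fun σ => desNum σ = j),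
    q ^ majNum σ

/-- [m]_{p,q} = p^{m−1} + p^{m−2} q + ⋯ + p q^{m−2} + q^{m−1}. -/
def pqnum {R : Type*} [CommRing R] (p q : R) (m : ℕ) : R :=
  ∑ i ∈ Finset.range m, p ^ (m - 1 - i) * q ^ i

/-- [m]_{p,q}! = [1]_{p,q} [2]_{p,q} ⋯ [m]_{p,q}. -/
def pqfact {R : Type*} [CommRing R] (p q : R) (m : ℕ) : R :=
  ∏ i ∈ Finset.range m, pqnum p q (i + 1)

/-- p,q-Stirling numbers: S_{0,0}(p,q)=1, S_{n,k}(p,q)=0 for k<0 or k>n, and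
S_{n+1,k}(p,q) = S_{n,k−1}(p,q) + [k]_{p,q} S_{n,k}(p,q). -/
def pqStirling {R : Type*} [CommRing R] (p q : R) : ℕ → ℕ → R
  | 0, 0 => 1
  | 0, _ + 1 => 0
  | _ + 1, 0 => 0
  | n + 1, k + 1 => pqStirling p q n k + pqnum p q (k + 1) * pqStirling p q n (k + 1)

/-!
Insert the letter `n + 1` into `τ ∈ 𝔖_n` in each of its `n + 1` slots. Counting the end of the
word as a descent, the `des τ + 1` slots at descents raise `maj` by `0, 1, …, des τ` and keep
`des`, while the other slots raise `maj` by `des τ + 1, …, n` and raise `des` by one. Hence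
`∑_{σ ∈ 𝔖_{n+1}} q^{maj σ} f(des σ) = ∑_{τ ∈ 𝔖_n} q^{maj τ} ([d+1]_q f(d) + q^{d+1} [n-d]_q f(d+1))`
with `d = des τ`.
Expanding `∏_{j ≤ d} (1 + z q^{-j}) = ∑_m e_m(q^{-1}, …, q^{-d}) z^m`, this recursion applied to
`f = e_m` reproduces the recursion of `[k]_q! S_{n,k}(q)` for `k = n - m`, because
`q^{d-m} [m+1]_q e_{m+1} = [d-m]_q e_m`.
-/

section QNumbers

variable {R : Type*} [CommRing R] (q : R)

lemma qnum_zero : qnum q 0 = 0 := by simp [qnum]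

lemma qnum_one : qnum q 1 = 1 := by simp [qnum]

lemma qnum_add (a b : ℕ) : qnum q (a + b) = qnum q a + q ^ a * qnum q b := by
  simp [qnum, sum_range_add, mul_sum, pow_add]

lemma qfact_succ (m : ℕ) : qfact q (m + 1) = qfact q m * qnum q (m + 1) :=
  prod_range_succ _ _

lemma qStirling_succ_succ (n k : ℕ) :
    qStirling q (n + 1) (k + 1) = qStirling q n k + qnum q (k + 1) * qStirling q n (k + 1) := rfl

lemma qStirling_eq_zero_of_lt {n k : ℕ} (h : n < k) : qStirling q n k = 0 := by
  induction n generalizing k with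
  | zero => obtain ⟨k, rfl⟩ : ∃ k', k = k' + 1 := ⟨k - 1, by omega⟩; rfl
  | succ n ih =>
    obtain ⟨k, rfl⟩ : ∃ k', k = k' + 1 := ⟨k - 1, by omega⟩
    rw [qStirling, ih (by omega), ih (by omega), mul_zero, add_zero]

end QNumbers

section ElementarySymmetric

variable {R : Type*} [CommRing R]

/-- The elementary symmetric polynomial `e_m(u, u², …, u^d)`. -/
def esymmPow (u : R) : ℕ → ℕ → R
  | _, 0 => 1
  | 0, _ + 1 => 0
  | d + 1, m + 1 => esymmPow u d (m + 1) + u ^ (d + 1) * esymmPow u d m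

variable (u : R)

@[simp]
lemma esymmPow_zero_right (d : ℕ) : esymmPow u d 0 = 1 := by cases d <;> rfl

lemma esymmPow_succ_succ (d m : ℕ) :
    esymmPow u (d + 1) (m + 1) = esymmPow u d (m + 1) + u ^ (d + 1) * esymmPow u d m := rfl

lemma esymmPow_eq_zero_of_lt {d m : ℕ} (h : d < m) : esymmPow u d m = 0 := by
  induction d generalizing m with
  | zero => obtain ⟨m, rfl⟩ : ∃ m', m = m' + 1 := ⟨m - 1, by omega⟩; rfl
  | succ d ih =>
    obtain ⟨m, rfl⟩ : ∃ m', m = m' + 1 := ⟨m - 1, by omega⟩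
    rw [esymmPow_succ_succ, ih (by omega), ih (by omega), mul_zero, add_zero]

lemma prod_one_add_mul_pow_eq_sum_esymmPow (z : R) (d : ℕ) :
    ∏ j ∈ Icc 1 d, (1 + z * u ^ j) = ∑ m ∈ range (d + 1), esymmPow u d m * z ^ m := by
  induction d with
  | zero => simp
  | succ d ih =>
    have hshift : ∑ m ∈ range (d + 1), esymmPow u d (m + 1) * z ^ (m + 1) + 1 =
        ∑ m ∈ range (d + 1), esymmPow u d m * z ^ m := by
      rw [sum_range_succ' (fun m => esymmPow u d m * z ^ m), sum_range_succ,
        esymmPow_eq_zero_of_lt u (Nat.lt_succ_self d)]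
      simp
    rw [prod_Icc_succ_top (by omega), ih, sum_range_succ' _ (d + 1)]
    simp only [esymmPow_succ_succ, esymmPow_zero_right, add_mul, sum_add_distrib, pow_zero,
      mul_one]
    rw [add_right_comm, hshift, mul_add, mul_one, sum_mul, add_right_inj]
    exact sum_congr rfl fun m _ => by ring

variable {q : R} (hqu : q * u = 1)
include hqu

lemma qpow_mul_qnum_mul_esymmPow_succ (d m : ℕ) :
    q ^ (d - m) * qnum q (m + 1) * esymmPow u d (m + 1) = qnum q (d - m) * esymmPow u d m := by
  induction d generalizing m with
  | zero => simp [esymmPow, qnum_zero]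
  | succ d ih =>
    have hpow (k : ℕ) : q ^ k * u ^ k = 1 := by rw [← mul_pow, hqu, one_pow]
    rcases m with _ | m
    · have e : qnum q (d + 1) = 1 + q * qnum q d := by rw [add_comm, qnum_add, qnum_one, pow_one]
      have := ih 0
      simp only [esymmPow_succ_succ, esymmPow_zero_right, zero_add, qnum_one, Nat.sub_zero]
        at this ⊢
      linear_combination q * this - e + hpow (d + 1)
    rcases Nat.lt_or_ge d (m + 1) with hdm | hmd
    · rw [esymmPow_eq_zero_of_lt u (by omega : d + 1 < m + 1 + 1),
        show d + 1 - (m + 1) = 0 by omega, qnum_zero, mul_zero, zero_mul]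
    obtain ⟨k, rfl⟩ := Nat.exists_eq_add_of_le hmd
    have ih1 := ih (m + 1)
    have ih2 := ih m
    rw [show m + 1 + k - (m + 1) = k by omega] at ih1
    rw [show m + 1 + k - m = k + 1 by omega] at ih2
    rw [show m + 1 + k + 1 - (m + 1) = k + 1 by omega, esymmPow_succ_succ, esymmPow_succ_succ]
    have e1 : qnum q (m + 1 + 1) = qnum q (m + 1) + q ^ (m + 1) := by
      rw [qnum_add, qnum_one, mul_one]
    have e2 : qnum q (k + 1) = 1 + q * qnum q k := by rw [add_comm, qnum_add, qnum_one, pow_one]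
    linear_combination q * ih1 + u ^ (m + 1 + k + 1) * ih2
      + q ^ (k + 1) * u ^ (m + 1 + k + 1) * esymmPow u (m + 1 + k) (m + 1) * e1
      - esymmPow u (m + 1 + k) (m + 1) * e2
      + esymmPow u (m + 1 + k) (m + 1) * hpow (m + 1 + k + 1)

lemma qnum_mul_esymmPow_add_qpow_mul_qnum_mul_esymmPow {d n : ℕ} (hd : d ≤ n) (m : ℕ) :
    qnum q (d + 1) * esymmPow u d (m + 1)
        + q ^ (d + 1) * qnum q (n - d) * esymmPow u (d + 1) (m + 1) =
      qnum q (n - m) * (esymmPow u d (m + 1) + esymmPow u d m) := by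
  rcases Nat.lt_or_ge d m with hdm | hmd
  · simp [esymmPow_eq_zero_of_lt u hdm, esymmPow_eq_zero_of_lt u (by omega : d < m + 1),
      esymmPow_eq_zero_of_lt u (by omega : d + 1 < m + 1)]
  obtain ⟨a, rfl⟩ := Nat.exists_eq_add_of_le hd
  obtain ⟨b, rfl⟩ := Nat.exists_eq_add_of_le hmd
  have key := qpow_mul_qnum_mul_esymmPow_succ u hqu (m + b) m
  have e1 := qnum_add q (m + b + 1) a
  have e2 := qnum_add q (a + b) (m + 1)
  have e3 := qnum_add q a b
  have hpow : q ^ (m + b + 1) * u ^ (m + b + 1) = 1 := by rw [← mul_pow, hqu, one_pow]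
  rw [show m + b - m = b by omega] at key
  rw [show m + b + a - (m + b) = a by omega, show m + b + a - m = a + b by omega,
    esymmPow_succ_succ]
  rw [show a + b + (m + 1) = m + b + 1 + a by omega] at e2
  rw [show m + b + 1 + a = m + b + a + 1 by omega] at e1 e2
  linear_combination -(esymmPow u (m + b) (m + 1)) * e1 + esymmPow u (m + b) (m + 1) * e2
    - esymmPow u (m + b) m * e3 + q ^ a * key + qnum q a * esymmPow u (m + b) m * hpow

end ElementarySymmetric

section Ranks

variable {α : Type*} [LinearOrder α] {M : Type*} [AddCommMonoid M]

lemma sum_card_filter_lt (s : Finset α) (f : ℕ → M) :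
    ∑ p ∈ s, f #(s.filter (· < p)) = ∑ i ∈ range #s, f i := by
  induction s using Finset.induction_on_max with
  | empty => simp
  | insert a s ha ih =>
    have has : a ∉ s := fun h => lt_irrefl a (ha a h)
    have hfilter : (insert a s).filter (· < a) = s := by
      ext x
      simp only [mem_filter, mem_insert]
      exact ⟨fun ⟨hx, hxa⟩ => hx.resolve_left hxa.ne, fun hx => ⟨Or.inr hx, ha x hx⟩⟩
    have hrest : ∀ p ∈ s, (insert a s).filter (· < p) = s.filter (· < p) := fun p hp => by
      rw [filter_insert, if_neg (ha p hp).not_gt]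
    rw [sum_insert has, card_insert_of_notMem has, sum_range_succ, hfilter, sum_congr rfl
      fun p hp => by rw [hrest p hp], ih, add_comm]

lemma sum_card_filter_gt (s : Finset α) (f : ℕ → M) :
    ∑ p ∈ s, f #(s.filter (p < ·)) = ∑ i ∈ range #s, f i :=
  sum_card_filter_lt (α := αᵒᵈ) s f

end Ranks

section SlotSums

variable {R : Type*} [CommRing R] (q : R)

lemma sum_pow_card_filter_gt (s : Finset ℕ) :
    ∑ p ∈ s, q ^ #(s.filter (p < ·)) = qnum q #s :=
  sum_card_filter_gt s (q ^ ·)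

-- For `p ∉ D`, the exponent `p + #{x ∈ D | p < x}` is `#D` plus the rank of `p` in `range N \ D`.
lemma sum_pow_add_card_filter_gt_sdiff {N : ℕ} {D : Finset ℕ} (hD : D ⊆ range N) :
    ∑ p ∈ range N \ D, q ^ (p + #(D.filter (p < ·))) = q ^ #D * qnum q (N - #D) := by
  set C := range N \ D
  have hrank : ∀ p ∈ C, p + #(D.filter (p < ·)) = #D + #(C.filter (· < p)) := by
    intro p hp
    obtain ⟨hpN, hpD⟩ := mem_sdiff.mp hp
    rw [mem_range] at hpN
    have hbelow : #((range p).filter (· ∈ D)) + #((range p).filter (· ∉ D)) = p := by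
      rw [card_filter_add_card_filter_not, card_range]
    have hsplit : #(D.filter (· < p)) + #(D.filter (p < ·)) = #D := by
      rw [← card_filter_add_card_filter_not (s := D) (p := (· < p))]
      congr 2
      exact filter_congr fun x hx => by
        have : x ≠ p := fun h => hpD (h ▸ hx)
        omega
    have h1 : (range p).filter (· ∈ D) = D.filter (· < p) := by
      ext x; simp only [mem_filter, mem_range]; tauto
    have h2 : (range p).filter (· ∉ D) = C.filter (· < p) := by
      ext x
      simp only [C, mem_filter, mem_range, mem_sdiff]
      exact ⟨fun ⟨hxp, hxD⟩ => ⟨⟨by omega, hxD⟩, hxp⟩, fun ⟨⟨_, hxD⟩, hxp⟩ => ⟨hxp, hxD⟩⟩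
    rw [h1, h2] at hbelow
    omega
  rw [sum_congr rfl fun p hp => by rw [hrank p hp, pow_add], ← mul_sum,
    sum_card_filter_lt C (q ^ ·), card_sdiff_of_subset hD, card_range, qnum]

end SlotSums

section Insertion

lemma oneline_of_le {m : ℕ} (σ : Equiv.Perm (Fin m)) {i : ℕ} (h1 : 1 ≤ i) (h2 : i ≤ m) :
    oneline σ i = (σ ⟨i - 1, by omega⟩ : ℕ) + 1 :=
  dif_pos ⟨h1, h2⟩

lemma oneline_zero {m : ℕ} (σ : Equiv.Perm (Fin m)) : oneline σ 0 = 0 := rfl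

lemma oneline_of_lt {m : ℕ} (σ : Equiv.Perm (Fin m)) {i : ℕ} (h : m < i) : oneline σ i = 0 :=
  dif_neg (by omega)

lemma oneline_le {m : ℕ} (σ : Equiv.Perm (Fin m)) (i : ℕ) : oneline σ i ≤ m := by
  unfold oneline
  split
  · exact (σ _).isLt
  · exact Nat.zero_le m

lemma mem_DesSet_iff {m : ℕ} (σ : Equiv.Perm (Fin m)) {i : ℕ} :
    i ∈ DesSet σ ↔ i < m ∧ oneline σ (i + 1) < oneline σ i := by
  rcases i with _ | i
  · simp [DesSet, oneline_zero]
  · simp only [DesSet, mem_filter, mem_Icc]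
    omega

lemma desNum_le {m : ℕ} (σ : Equiv.Perm (Fin m)) : desNum σ ≤ m - 1 := by
  have := card_le_card (filter_subset _ _ : DesSet σ ⊆ Icc 1 (m - 1))
  rwa [Nat.card_Icc, Nat.add_sub_cancel] at this

variable {n : ℕ}

-- Inserts the letter `n + 1` into the one-line notation of `τ` at position `p + 1`.
def insPerm (τ : Equiv.Perm (Fin n)) (p : Fin (n + 1)) : Equiv.Perm (Fin (n + 1)) :=
  ((finSuccEquiv' p).trans (Equiv.optionCongr τ)).trans finSuccEquivLast.symm

lemma insPerm_apply_self (τ : Equiv.Perm (Fin n)) (p : Fin (n + 1)) :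
    insPerm τ p p = Fin.last n := by
  simp [insPerm]

lemma insPerm_apply_succAbove (τ : Equiv.Perm (Fin n)) (p : Fin (n + 1)) (j : Fin n) :
    insPerm τ p (p.succAbove j) = (τ j).castSucc := by
  simp [insPerm]

lemma insPerm_bijective :
    Function.Bijective fun τp : Equiv.Perm (Fin n) × Fin (n + 1) => insPerm τp.1 τp.2 := by
  rw [Fintype.bijective_iff_injective_and_card]
  refine ⟨?_, by simp [Fintype.card_perm, Nat.factorial_succ, mul_comm]⟩
  rintro ⟨τ, p⟩ ⟨τ', p'⟩ h
  simp only at h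
  obtain rfl : p = p' := (insPerm τ' p').injective <| by
    rw [insPerm_apply_self, ← h, insPerm_apply_self]
  refine Prod.ext (Equiv.ext fun j => Fin.castSucc_injective n ?_) rfl
  simpa only [insPerm_apply_succAbove] using congrArg (· (p.succAbove j)) h

lemma oneline_insPerm (τ : Equiv.Perm (Fin n)) (p : Fin (n + 1)) (i : ℕ) :
    oneline (insPerm τ p) i =
      if i ≤ p then oneline τ i else if i = p + 1 then n + 1 else oneline τ (i - 1) := by
  rcases Nat.eq_zero_or_pos i with rfl | hi
  · simp [oneline_zero]
  split_ifs with hip hp1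
  · rw [oneline_of_le _ hi (by omega), oneline_of_le _ hi (by omega)]
    have : (⟨i - 1, by omega⟩ : Fin (n + 1)) = p.succAbove ⟨i - 1, by omega⟩ := by
      rw [Fin.succAbove_of_castSucc_lt _ _ (by rw [Fin.lt_def]; simp; omega)]
      rfl
    rw [this, insPerm_apply_succAbove]
    rfl
  · subst hp1
    rw [oneline_of_le _ (by omega) (by omega)]
    simp only [Nat.add_sub_cancel, Fin.eta, insPerm_apply_self, Fin.val_last]
  · rcases Nat.lt_or_ge (n + 1) i with hin | hin
    · rw [oneline_of_lt _ hin, oneline_of_lt _ (by omega)]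
    rw [oneline_of_le _ hi hin, oneline_of_le _ (by omega) (by omega)]
    have : (⟨i - 1, by omega⟩ : Fin (n + 1)) = p.succAbove ⟨i - 1 - 1, by omega⟩ := by
      rw [Fin.succAbove_of_le_castSucc _ _ (by rw [Fin.le_def]; simp; omega)]
      ext; simp; omega
    rw [this, insPerm_apply_succAbove]
    rfl

lemma mem_DesSet_insPerm (τ : Equiv.Perm (Fin n)) (p : Fin (n + 1)) (i : ℕ) :
    i ∈ DesSet (insPerm τ p) ↔
      i < p ∧ i ∈ DesSet τ ∨ i = p + 1 ∧ (p : ℕ) < n ∨ p + 1 < i ∧ i - 1 ∈ DesSet τ := by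
  have h1 := oneline_le τ i
  rw [mem_DesSet_iff, mem_DesSet_iff, mem_DesSet_iff, oneline_insPerm, oneline_insPerm]
  rcases Nat.lt_or_ge i p with hip | hip
  · simp only [if_pos (by omega : i + 1 ≤ p), if_pos hip.le]
    omega
  rcases Nat.lt_or_ge (p + 1) i with hpi | hpi
  · simp only [if_neg (by omega : ¬ i + 1 ≤ p), if_neg (by omega : ¬ i ≤ p),
      if_neg (by omega : i + 1 ≠ p + 1), if_neg (by omega : i ≠ p + 1), Nat.add_sub_cancel,
      Nat.sub_add_cancel (by omega : 1 ≤ i)]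
    omega
  simp only [Nat.add_sub_cancel]
  split_ifs <;> omega

lemma notMem_DesSet_self {m : ℕ} (σ : Equiv.Perm (Fin m)) : m ∉ DesSet σ := by
  simp [mem_DesSet_iff]

-- Appending `n` to `Des(τ)` (a descent at the end of the word) makes the insertion uniform in `p`.
lemma insert_DesSet_insPerm (τ : Equiv.Perm (Fin n)) (p : Fin (n + 1)) :
    insert (n + 1) (DesSet (insPerm τ p)) =
      (insert n (DesSet τ)).filter (· < (p : ℕ)) ∪
        insert ((p : ℕ) + 1) (((insert n (DesSet τ)).filter ((p : ℕ) < ·)).image (· + 1)) := by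
  ext i
  have hp := p.isLt
  have hi : i ∈ DesSet τ → i < n := fun h => ((mem_DesSet_iff τ).mp h).1
  have hi' : i - 1 ∈ DesSet τ → i - 1 < n := fun h => ((mem_DesSet_iff τ).mp h).1
  have himage : (∃ a, ((a = n ∨ a ∈ DesSet τ) ∧ p < a) ∧ a + 1 = i) ↔
      0 < i ∧ (i - 1 = n ∨ i - 1 ∈ DesSet τ) ∧ p < i - 1 :=
    ⟨fun ⟨a, ha, hai⟩ => by subst hai; simpa using ha,
      fun ⟨hi0, ha⟩ => ⟨i - 1, ha, Nat.sub_add_cancel hi0⟩⟩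
  simp only [mem_insert, mem_union, mem_filter, mem_image, mem_DesSet_insPerm, himage]
  by_cases h : i ∈ DesSet τ <;> by_cases h' : i - 1 ∈ DesSet τ <;>
    simp only [h, h', or_true, true_and, and_true, and_false, or_false, false_or, true_implies]
      at hi hi' ⊢ <;> omega

lemma sum_eq_sum_filter_lt_add_ite_add_sum_filter_gt {M : Type*} [AddCommMonoid M]
    (s : Finset ℕ) (p : ℕ) (g : ℕ → M) :
    ∑ x ∈ s, g x =
      ∑ x ∈ s.filter (· < p), g x + ((if p ∈ s then g p else 0) + ∑ x ∈ s.filter (p < ·), g x) := by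
  rw [sum_filter, sum_filter, ← sum_ite_eq, ← sum_add_distrib, ← sum_add_distrib]
  refine sum_congr rfl fun x _ => ?_
  rcases lt_trichotomy x p with h | rfl | h
  · simp [h, h.ne', h.not_gt]
  · simp
  · simp [h, h.ne, h.not_gt]

lemma sum_insert_DesSet_insPerm {M : Type*} [AddCommMonoid M] (τ : Equiv.Perm (Fin n))
    (p : Fin (n + 1)) (g : ℕ → M) :
    ∑ i ∈ insert (n + 1) (DesSet (insPerm τ p)), g i =
      ∑ x ∈ (insert n (DesSet τ)).filter (· < (p : ℕ)), g x +
        (g ((p : ℕ) + 1) + ∑ x ∈ (insert n (DesSet τ)).filter ((p : ℕ) < ·), g (x + 1)) := by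
  rw [insert_DesSet_insPerm, sum_union, sum_insert, sum_image]
  · exact fun x _ y _ h => Nat.add_right_cancel h
  · simp
  · rw [disjoint_left]
    intro x hx hx'
    simp only [mem_filter, mem_insert, mem_image] at hx hx'
    omega

lemma majNum_insPerm (τ : Equiv.Perm (Fin n)) (p : Fin (n + 1)) :
    majNum (insPerm τ p) + (if (p : ℕ) ∈ insert n (DesSet τ) then (p : ℕ) else 0) =
      majNum τ + p + #((insert n (DesSet τ)).filter ((p : ℕ) < ·)) := by
  have hσ := sum_insert_DesSet_insPerm τ p id
  have hτ := sum_eq_sum_filter_lt_add_ite_add_sum_filter_gt (insert n (DesSet τ)) p id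
  rw [sum_insert (notMem_DesSet_self _)] at hσ hτ
  simp only [id, sum_add_distrib, sum_const, smul_eq_mul, mul_one] at hσ hτ
  unfold majNum
  split_ifs at hτ ⊢ <;> omega

lemma desNum_insPerm (τ : Equiv.Perm (Fin n)) (p : Fin (n + 1)) :
    desNum (insPerm τ p) + (if (p : ℕ) ∈ insert n (DesSet τ) then 1 else 0) = desNum τ + 1 := by
  have hσ := sum_insert_DesSet_insPerm τ p (fun _ => 1)
  have hτ := sum_eq_sum_filter_lt_add_ite_add_sum_filter_gt (insert n (DesSet τ)) p (fun _ => 1)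
  rw [sum_insert (notMem_DesSet_self _)] at hσ hτ
  simp only [sum_const, smul_eq_mul, mul_one] at hσ hτ
  unfold desNum
  split_ifs at hτ ⊢ <;> omega

end Insertion

section Recursion

variable {R : Type*} [CommRing R] (q : R)

lemma sum_insPerm (f : ℕ → R) {n : ℕ} (τ : Equiv.Perm (Fin n)) :
    ∑ p, q ^ majNum (insPerm τ p) * f (desNum (insPerm τ p)) =
      q ^ majNum τ * (qnum q (desNum τ + 1) * f (desNum τ)
        + q ^ (desNum τ + 1) * qnum q (n - desNum τ) * f (desNum τ + 1)) := by
  set D := insert n (DesSet τ)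
  have hD : D ⊆ range (n + 1) := by
    intro x hx
    rcases mem_insert.mp hx with rfl | hx
    · exact self_mem_range_succ x
    · exact mem_range.mpr (((mem_DesSet_iff τ).mp hx).1.trans (Nat.lt_succ_self n))
  have hcard : #D = desNum τ + 1 := card_insert_of_notMem (notMem_DesSet_self τ)
  set G : ℕ → R := fun p => if p ∈ D then q ^ majNum τ * q ^ #(D.filter (p < ·)) * f (desNum τ)
    else q ^ majNum τ * q ^ (p + #(D.filter (p < ·))) * f (desNum τ + 1)
  have hG (p : Fin (n + 1)) : q ^ majNum (insPerm τ p) * f (desNum (insPerm τ p)) = G p := by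
    have hmaj : majNum (insPerm τ p) + (if (p : ℕ) ∈ D then (p : ℕ) else 0) =
        majNum τ + p + #(D.filter ((p : ℕ) < ·)) := majNum_insPerm τ p
    have hdes : desNum (insPerm τ p) + (if (p : ℕ) ∈ D then 1 else 0) = desNum τ + 1 :=
      desNum_insPerm τ p
    by_cases hp : (p : ℕ) ∈ D
    · simp only [G, if_pos hp] at hmaj hdes ⊢
      rw [← pow_add, show majNum (insPerm τ p) = majNum τ + #(D.filter ((p : ℕ) < ·)) by
        omega, show desNum (insPerm τ p) = desNum τ by omega]
    · simp only [G, if_neg hp] at hmaj hdes ⊢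
      rw [← pow_add, show majNum (insPerm τ p) = majNum τ + (p + #(D.filter ((p : ℕ) < ·))) by
        omega, show desNum (insPerm τ p) = desNum τ + 1 by omega]
  calc ∑ p, q ^ majNum (insPerm τ p) * f (desNum (insPerm τ p))
      = ∑ p ∈ D, G p + ∑ p ∈ range (n + 1) \ D, G p := by
        rw [sum_congr rfl fun p _ => hG p, Fin.sum_univ_eq_sum_range G, ← sum_sdiff hD,
          add_comm]
    _ = q ^ majNum τ * f (desNum τ) * ∑ p ∈ D, q ^ #(D.filter (p < ·))
          + q ^ majNum τ * f (desNum τ + 1) *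
            ∑ p ∈ range (n + 1) \ D, q ^ (p + #(D.filter (p < ·))) := by
      simp only [mul_sum]
      congr 1 <;> refine sum_congr rfl fun p hp => ?_
      · simp only [G, if_pos hp]; ring
      · simp only [G, if_neg (mem_sdiff.mp hp).2]; ring
    _ = _ := by
      rw [sum_pow_card_filter_gt, sum_pow_add_card_filter_gt_sdiff q hD, hcard,
        show n + 1 - (desNum τ + 1) = n - desNum τ by omega]
      ring

lemma sum_perm_succ (f : ℕ → R) (n : ℕ) :
    ∑ σ : Equiv.Perm (Fin (n + 1)), q ^ majNum σ * f (desNum σ) =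
      ∑ τ : Equiv.Perm (Fin n), q ^ majNum τ *
        (qnum q (desNum τ + 1) * f (desNum τ)
          + q ^ (desNum τ + 1) * qnum q (n - desNum τ) * f (desNum τ + 1)) := by
  rw [← Fintype.sum_bijective _ insPerm_bijective _ _ fun _ => rfl, Fintype.sum_prod_type]
  exact sum_congr rfl fun τ _ => sum_insPerm q f τ

variable {u : R} (hqu : q * u = 1)
include hqu

theorem sum_perm_pow_majNum_mul_esymmPow {n m : ℕ} (hm : m ≤ n) :
    ∑ σ : Equiv.Perm (Fin n), q ^ majNum σ * esymmPow u (desNum σ) m =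
      qfact q (n - m) * qStirling q n (n - m) := by
  induction n generalizing m with
  | zero =>
    obtain rfl : m = 0 := by omega
    simp [majNum, desNum, DesSet, qfact, qStirling]
  | succ n ih =>
    rw [sum_perm_succ q (esymmPow u · m)]
    rcases m with _ | m
    · have hstep (τ : Equiv.Perm (Fin n)) : qnum q (desNum τ + 1) * esymmPow u (desNum τ) 0
          + q ^ (desNum τ + 1) * qnum q (n - desNum τ) * esymmPow u (desNum τ + 1) 0 =
            qnum q (n + 1) * esymmPow u (desNum τ) 0 := by
        simp only [esymmPow_zero_right, mul_one, ← qnum_add]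
        congr 1
        have := desNum_le τ
        omega
      simp only [hstep, mul_left_comm _ (qnum q (n + 1)), ← mul_sum, ih (Nat.zero_le n),
        Nat.sub_zero, qfact_succ, qStirling, qStirling_eq_zero_of_lt q (Nat.lt_succ_self n)]
      ring
    · have hstep (τ : Equiv.Perm (Fin n)) :=
        qnum_mul_esymmPow_add_qpow_mul_qnum_mul_esymmPow u hqu
          ((desNum_le τ).trans (Nat.sub_le n 1)) m
      simp only [hstep, mul_left_comm _ (qnum q (n - m)), ← mul_sum, mul_add, sum_add_distrib]
      rcases Nat.lt_or_ge m n with hmn | hmn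
      · obtain ⟨k, rfl⟩ := Nat.exists_eq_add_of_lt hmn
        rw [ih (by omega), ih (by omega), show m + k + 1 - (m + 1) = k by omega,
          show m + k + 1 - m = k + 1 by omega, show m + k + 1 + 1 - (m + 1) = k + 1 by omega,
          qStirling_succ_succ q (m + k + 1) k, qfact_succ]
        ring
      · rw [show n - m = 0 by omega, show n + 1 - (m + 1) = 0 by omega, qnum_zero]
        simp [qStirling]

end Recursion

/-- For a field K, q ≠ 0, z ∈ K and n ≥ 1,
Σ_{σ∈𝔖_n} q^{maj(σ)} Π_{j=1}^{des(σ)} (1 + z q^{−j}) = Σ_{k=1}^n [k]_q! S_{n,k}(q) z^{n−k}. -/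
theorem statement3 {K : Type*} [Field K] (q z : K) (hq : q ≠ 0) (n : ℕ) (hn : 1 ≤ n) :
    ∑ σ : Equiv.Perm (Fin n),
        q ^ majNum σ * ∏ j ∈ Finset.Icc 1 (desNum σ), (1 + z * (q ^ j)⁻¹) =
      ∑ k ∈ Finset.Icc 1 n, qfact q k * qStirling q n k * z ^ (n - k) := by
  have hqu : q * q⁻¹ = 1 := mul_inv_cancel₀ hq
  have hexpand (σ : Equiv.Perm (Fin n)) :
      ∏ j ∈ Icc 1 (desNum σ), (1 + z * (q ^ j)⁻¹) =
        ∑ m ∈ range n, esymmPow q⁻¹ (desNum σ) m * z ^ m := by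
    simp only [← inv_pow, prod_one_add_mul_pow_eq_sum_esymmPow]
    refine sum_subset (range_subset_range.mpr (by have := desNum_le σ; omega)) fun m _ hm => ?_
    rw [esymmPow_eq_zero_of_lt _ (by simpa using hm), zero_mul]
  calc _ = ∑ m ∈ range n,
          (∑ σ : Equiv.Perm (Fin n), q ^ majNum σ * esymmPow q⁻¹ (desNum σ) m) * z ^ m := by
        simp only [hexpand, mul_sum, sum_mul, mul_assoc]
        exact sum_comm
    _ = ∑ m ∈ range n, qfact q (n - m) * qStirling q n (n - m) * z ^ (n - (n - m)) := by
        refine sum_congr rfl fun m hm => ?_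
        rw [sum_perm_pow_majNum_mul_esymmPow q hqu (mem_range.mp hm).le,
          Nat.sub_sub_self (mem_range.mp hm).le]
    _ = _ := by
        rw [← Nat.Ico_zero_eq_range, ← Finset.Ico_add_one_right_eq_Icc]
        convert sum_Ico_reflect (fun k => qfact q k * qStirling q n k * z ^ (n - k)) 0
          (Nat.le_succ n) using 2
        simp
end

section
/- Let K be a field, let q ∈ K be nonzero, and let z ∈ K. For all n ≥ 1, Σ_{σ∈𝔖_n} q^{inv(σ)} · Π_{i∈Asc(σ)} (1 + z·q^{−inv^{□,i+1}(σ)}) = Σ_{σ∈𝔖_n} q^{inv(σ)} · Π_{i∈Des(σ)} (1 + z·q^{−(1 + inv^{□,i}(σ))}). -/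
open Finset

/-! Writing `c j = invEnd σ j` for the inversion code of `σ`, position `i` is an ascent iff
`c (i + 1) ≤ c i` and a descent iff `c i < c (i + 1)`, and `q ^ inv σ = ∏ j, q ^ c j`. So both
sides are sums over codes of products of factors attached to consecutive code values, and building
a permutation by appending its last value turns each of them into a transfer-matrix recursion in
`n`. The two recursions are intertwined: the ascent-side sum weighted by `(c n + r).choose r`
equals the descent-side sum weighted by an explicit `q`-analogue `descTest q r n (c n)`, proved
for all `r` at once by induction on `n` from the hockey-stick identity. The case `r = 0` is the
theorem. -/

open Equiv

section Code

variable {n : ℕ} {σ : Perm (Fin n)} {i : ℕ}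

lemma oneline_of_mem (h1 : 1 ≤ i) (h2 : i ≤ n) :
    oneline σ i = (σ ⟨i - 1, by omega⟩ : ℕ) + 1 :=
  dif_pos ⟨h1, h2⟩

lemma oneline_ne_oneline_succ (h1 : 1 ≤ i) (h2 : i < n) :
    oneline σ i ≠ oneline σ (i + 1) := by
  rw [oneline_of_mem h1 h2.le, oneline_of_mem (by omega) h2]
  intro h
  have := σ.injective (Fin.ext (Nat.add_right_cancel h))
  simp only [Fin.mk.injEq] at this
  omega

lemma invEnd_one : invEnd σ 1 = 0 := by
  simp only [invEnd, card_eq_zero, filter_eq_empty_iff, mem_Icc]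
  omega

lemma invEnd_le (j : ℕ) : invEnd σ j ≤ n :=
  (card_filter_le _ _).trans (by simp)

lemma invEnd_succ_le_of_lt (h : oneline σ i < oneline σ (i + 1)) :
    invEnd σ (i + 1) ≤ invEnd σ i := by
  refine card_le_card fun b hb => ?_
  simp only [mem_filter] at hb ⊢
  obtain ⟨hb, hbi, hσ⟩ := hb
  have : b ≠ i := by rintro rfl; omega
  exact ⟨hb, by omega, h.trans hσ⟩

lemma invEnd_lt_succ_of_lt (h1 : 1 ≤ i) (h2 : i ≤ n) (h : oneline σ (i + 1) < oneline σ i) :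
    invEnd σ i < invEnd σ (i + 1) := by
  refine card_lt_card ⟨fun b hb => ?_, fun hsub => ?_⟩
  · simp only [mem_filter] at hb ⊢
    exact ⟨hb.1, by omega, h.trans hb.2.2⟩
  · have := @hsub i (by simp only [mem_filter, mem_Icc]; omega)
    simp only [mem_filter] at this
    omega

lemma invEnd_succ_le_iff (h1 : 1 ≤ i) (h2 : i < n) :
    invEnd σ (i + 1) ≤ invEnd σ i ↔ oneline σ i < oneline σ (i + 1) := by
  have := oneline_ne_oneline_succ (σ := σ) h1 h2
  have := invEnd_succ_le_of_lt (σ := σ) (i := i)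
  have := invEnd_lt_succ_of_lt (σ := σ) h1 h2.le
  omega

lemma invEnd_lt_succ_iff (h1 : 1 ≤ i) (h2 : i < n) :
    invEnd σ i < invEnd σ (i + 1) ↔ oneline σ (i + 1) < oneline σ i := by
  have := oneline_ne_oneline_succ (σ := σ) h1 h2
  have := invEnd_succ_le_of_lt (σ := σ) (i := i)
  have := invEnd_lt_succ_of_lt (σ := σ) h1 h2.le
  omega

lemma invNum_eq_sum_invEnd (σ : Perm (Fin n)) : invNum σ = ∑ j ∈ Icc 1 n, invEnd σ j := by
  rw [invNum, card_eq_sum_card_fiberwise (f := Prod.snd) (t := Icc 1 n)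
    (fun p hp => (mem_product.mp (mem_filter.mp hp).1).2)]
  refine sum_congr rfl fun j hj => ?_
  refine card_nbij' Prod.fst (fun i => (i, j)) ?_ ?_ ?_ ?_
  · intro p hp
    simp only [mem_coe, mem_filter, mem_product] at hp ⊢
    obtain ⟨⟨⟨hi, -⟩, hlt, hσ⟩, rfl⟩ := hp
    exact ⟨hi, hlt, hσ⟩
  · intro i hi
    simp only [mem_coe, mem_filter, mem_product] at hi ⊢
    exact ⟨⟨⟨hi.1, hj⟩, hi.2⟩, trivial⟩
  · intro p hp
    simp only [mem_coe, mem_filter] at hp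
    exact Prod.ext rfl hp.2.symm
  · intro i _
    rfl

lemma invNum_eq_sum_Ico_invEnd_succ (σ : Perm (Fin n)) :
    invNum σ = ∑ i ∈ Ico 1 n, invEnd σ (i + 1) := by
  rw [invNum_eq_sum_invEnd, sum_Ico_add', ← Ico_add_one_right_eq_Icc]
  refine (sum_subset (Ico_subset_Ico_left (by omega)) fun j hj hj' => ?_).symm
  obtain rfl : j = 1 := by simp only [mem_Ico] at hj hj'; omega
  exact invEnd_one

lemma invNum_eq_sum_Ico_invEnd_add (hn : 1 ≤ n) (σ : Perm (Fin n)) :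
    invNum σ = ∑ i ∈ Ico 1 n, invEnd σ i + invEnd σ n := by
  rw [invNum_eq_sum_invEnd, ← Ico_add_one_right_eq_Icc, sum_Ico_succ_top hn]

end Code

section Snoc

variable {m : ℕ}

/-- The permutation of `Fin (m + 1)` ending in the value `p` whose first `m` values are in the
same relative order as `e`. -/
def permSnoc (e : Perm (Fin m)) (p : Fin (m + 1)) : Perm (Fin (m + 1)) :=
  (finSuccEquiv' (Fin.last m)).trans ((optionCongr e).trans (finSuccEquiv' p).symm)

variable (e : Perm (Fin m)) (p : Fin (m + 1))

@[simp]
lemma permSnoc_last : permSnoc e p (Fin.last m) = p := by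
  simp [permSnoc]

@[simp]
lemma permSnoc_castSucc (x : Fin m) : permSnoc e p x.castSucc = p.succAbove (e x) := by
  rw [← Fin.succAbove_last, permSnoc, trans_apply, trans_apply, finSuccEquiv'_succAbove,
    optionCongr_apply, Option.map_some, finSuccEquiv'_symm_some]

lemma permSnoc_bijective :
    Function.Bijective fun ep : Perm (Fin m) × Fin (m + 1) => permSnoc ep.1 ep.2 := by
  refine (Fintype.bijective_iff_injective_and_card _).mpr ⟨?_, ?_⟩
  · rintro ⟨e, p⟩ ⟨e', p'⟩ h
    obtain rfl : p = p' := by simpa using congr($h (Fin.last m))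
    refine Prod.ext (Equiv.ext fun x => ?_) rfl
    simpa using congr($h x.castSucc)
  · simp [Fintype.card_perm, Nat.factorial_succ, mul_comm]

lemma sum_perm_succ_s5 {M : Type*} [AddCommMonoid M] (f : Perm (Fin (m + 1)) → M) :
    ∑ σ, f σ = ∑ e : Perm (Fin m), ∑ p : Fin (m + 1), f (permSnoc e p) := by
  rw [← Fintype.sum_prod_type', Fintype.sum_bijective _ permSnoc_bijective _ _ fun _ => rfl]

lemma oneline_permSnoc_lt_iff {i j : ℕ} (hi : 1 ≤ i) (hi' : i ≤ m) (hj : 1 ≤ j)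
    (hj' : j ≤ m) :
    oneline (permSnoc e p) i < oneline (permSnoc e p) j ↔ oneline e i < oneline e j := by
  have hcast : ∀ k (h1 : 1 ≤ k) (h2 : k ≤ m),
      (⟨k - 1, by omega⟩ : Fin (m + 1)) = (⟨k - 1, by omega⟩ : Fin m).castSucc :=
    fun _ _ _ => rfl
  rw [oneline_of_mem hi (by omega), oneline_of_mem hj (by omega), oneline_of_mem hi hi',
    oneline_of_mem hj hj', hcast i hi hi', hcast j hj hj', permSnoc_castSucc, permSnoc_castSucc]
  simp only [Nat.add_lt_add_iff_right, Fin.val_fin_lt, Fin.succAbove_lt_succAbove_iff]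

lemma invEnd_permSnoc {j : ℕ} (hj : 1 ≤ j) (hj' : j ≤ m) :
    invEnd (permSnoc e p) j = invEnd e j := by
  simp only [invEnd]
  congr 1
  ext i
  simp only [mem_filter, mem_Icc]
  constructor
  · rintro ⟨⟨hi, -⟩, hij, hσ⟩
    exact ⟨⟨hi, by omega⟩, hij, (oneline_permSnoc_lt_iff e p hj hj' hi (by omega)).mp hσ⟩
  · rintro ⟨⟨hi, hi'⟩, hij, hσ⟩
    exact ⟨⟨hi, by omega⟩, hij, (oneline_permSnoc_lt_iff e p hj hj' hi hi').mpr hσ⟩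

end Snoc

lemma invEnd_val_add_one {n : ℕ} (σ : Perm (Fin n)) (k : Fin n) :
    invEnd σ (k + 1) = #{x | x < k ∧ σ k < σ x} := by
  have hk : oneline σ (k + 1) = (σ k : ℕ) + 1 := oneline_of_mem (by omega) k.isLt
  refine card_bij' (fun i hi => ⟨i - 1, by simp only [mem_filter, mem_Icc] at hi; omega⟩)
    (fun x _ => x + 1) (fun i hi => ?_) (fun x hx => ?_)
    (fun i hi => Nat.sub_add_cancel (mem_Icc.mp (mem_filter.mp hi).1).1) (fun x _ => rfl)
  · simp only [mem_filter, mem_Icc, mem_univ, true_and] at hi ⊢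
    obtain ⟨⟨hi1, hi2⟩, hik, hσ⟩ := hi
    rw [hk, oneline_of_mem hi1 hi2] at hσ
    exact ⟨Fin.lt_def.mpr (by simp; omega), Fin.val_fin_lt.mp (by omega)⟩
  · simp only [mem_filter, mem_Icc, mem_univ, true_and] at hx ⊢
    rw [hk, oneline_of_mem (by omega) (by omega)]
    exact ⟨by omega, by omega, by simpa using Fin.val_fin_lt.mpr hx.2⟩

lemma invEnd_last {m : ℕ} (σ : Perm (Fin (m + 1))) :
    invEnd σ (m + 1) = m - σ (Fin.last m) := by
  calc invEnd σ (m + 1) = #{x | x < Fin.last m ∧ σ (Fin.last m) < σ x} :=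
        invEnd_val_add_one σ (Fin.last m)
    _ = #{x | σ (Fin.last m) < σ x} := by
        refine congrArg card (filter_congr fun x _ => and_iff_right_of_imp fun h => ?_)
        exact Fin.lt_last_iff_ne_last.mpr (by rintro rfl; exact lt_irrefl _ h)
    _ = #{v | σ (Fin.last m) < v} := card_equiv σ (by simp)
    _ = m - σ (Fin.last m) := by rw [filter_lt_eq_Ioi, Fin.card_Ioi, Nat.add_sub_cancel]

section Transfer

variable {R : Type*} [CommSemiring R]

-- `j ↦ invEnd σ j` (for `1 ≤ j ≤ n`) is the inversion code of `σ`, a bijection onto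
-- `∏ j, [0, j)`; both sides of the theorem are sums over codes of products of factors
-- `w (c i) (c (i + 1))` attached to consecutive positions.
def codeWeight (w : ℕ → ℕ → R) {n : ℕ} (σ : Perm (Fin n)) : R :=
  ∏ i ∈ Ico 1 n, w (invEnd σ i) (invEnd σ (i + 1))

def codeSum (w : ℕ → ℕ → R) (n : ℕ) (g : ℕ → R) : R :=
  ∑ σ : Perm (Fin n), g (invEnd σ n) * codeWeight w σ

variable (w : ℕ → ℕ → R) {n m : ℕ}

lemma codeWeight_permSnoc (hm : 1 ≤ m) (e : Perm (Fin m)) (p : Fin (m + 1)) :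
    codeWeight w (permSnoc e p) = codeWeight w e * w (invEnd e m) (m - p) := by
  rw [codeWeight, prod_Ico_succ_top hm, invEnd_last, permSnoc_last, invEnd_permSnoc e p hm le_rfl,
    codeWeight]
  congr 1
  refine prod_congr rfl fun i hi => ?_
  simp only [mem_Ico] at hi
  rw [invEnd_permSnoc e p hi.1 hi.2.le, invEnd_permSnoc e p (by omega) hi.2]

lemma sum_fin_succ_sub {M : Type*} [AddCommMonoid M] (F : ℕ → M) :
    ∑ p : Fin (m + 1), F (m - p) = ∑ a ∈ range (m + 1), F a := by
  simpa [Fin.sum_univ_eq_sum_range (fun i => F (m - i))] using sum_range_reflect F (m + 1)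

-- Appending the last value `p` to `e` appends the code value `m - p`: a transfer-matrix step.
lemma codeSum_succ (hm : 1 ≤ m) (g : ℕ → R) :
    codeSum w (m + 1) g = codeSum w m fun b => ∑ a ∈ range (m + 1), w b a * g a := by
  rw [codeSum, sum_perm_succ_s5, codeSum]
  refine sum_congr rfl fun e _ => ?_
  simp only [invEnd_last, permSnoc_last, codeWeight_permSnoc w hm]
  rw [sum_fin_succ_sub fun a => g a * (codeWeight w e * w (invEnd e m) a), sum_mul]
  exact sum_congr rfl fun a _ => by ring

lemma codeSum_one (g : ℕ → R) : codeSum w 1 g = g 0 := by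
  simp [codeSum, codeWeight, invEnd_one]

lemma codeSum_congr {f g : ℕ → R} (h : ∀ b ≤ n, f b = g b) :
    codeSum w n f = codeSum w n g :=
  sum_congr rfl fun σ _ => by rw [h _ (invEnd_le _)]

lemma codeSum_add_mul (s t : R) (f g : ℕ → R) :
    codeSum w n (fun b => s * f b + t * g b) = s * codeSum w n f + t * codeSum w n g := by
  simp only [codeSum, add_mul, sum_add_distrib, mul_sum, mul_assoc]

end Transfer

lemma sum_Ico_sub_add_choose {b k : ℕ} (hbk : b ≤ k) (r : ℕ) :
    ∑ a ∈ Ico b (k + 1), (k - a + r).choose r = (k - b + r + 1).choose (r + 1) := by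
  rw [sum_Ico_eq_sum_range, show k + 1 - b = k - b + 1 by omega, ← Nat.sum_range_add_choose,
    ← sum_range_reflect]
  refine sum_congr rfl fun i hi => ?_
  rw [mem_range] at hi
  congr 2
  omega

section Claim

variable {R : Type*} [CommSemiring R] (q : R)

-- The descent-side partner of `b ↦ (b + r).choose r`: `codeSum_succ` turns the latter into a
-- constant plus `z * q * (b + r + 1).choose (r + 1)` on the ascent side, and
-- `descTest q r (m + 1)` into the same constant times `q ^ b` plus `z * q * descTest q (r + 1) m b`
-- on the descent side. It is the closed form of
-- `q * descTest q (r + 1) m b = ∑ a ∈ Ioc b m, descTest q r (m + 1) a`.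
def descTest : ℕ → ℕ → ℕ → R
  | 0, _, b => q ^ b
  | r + 1, m, b => ∑ k ∈ Ico b m, ((k - b + r).choose r : R) * q ^ k

lemma sum_Ico_descTest_succ (r b m : ℕ) :
    ∑ a ∈ Ico b (m + 1), descTest q (r + 1) (m + 1) a
      = ∑ k ∈ Ico b (m + 1), ((k - b + r + 1).choose (r + 1) : R) * q ^ k := by
  simp only [descTest]
  rw [sum_Ico_Ico_comm]
  refine sum_congr rfl fun k hk => ?_
  rw [← sum_mul, ← Nat.cast_sum, sum_Ico_sub_add_choose (mem_Ico.mp hk).1]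

lemma sum_range_descTest (r m : ℕ) :
    ∑ a ∈ range (m + 1), descTest q r (m + 1) a
      = ∑ a ∈ range (m + 1), ((a + r).choose r : R) * q ^ a := by
  cases r with
  | zero => simp [descTest]
  | succ r =>
    rw [range_eq_Ico, sum_Ico_descTest_succ]
    exact sum_congr rfl fun a _ => by rw [Nat.sub_zero, add_assoc]

lemma sum_Ioc_descTest (r b m : ℕ) :
    ∑ a ∈ Ioc b m, descTest q r (m + 1) a = q * descTest q (r + 1) m b := by
  cases r with
  | zero =>
    rw [← Ico_add_one_add_one_eq_Ioc, ← sum_Ico_add', descTest, mul_sum]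
    exact sum_congr rfl fun k _ => by simp [descTest, pow_succ, mul_comm]
  | succ r =>
    rw [← Ico_add_one_add_one_eq_Ioc, sum_Ico_descTest_succ, ← sum_Ico_add', descTest, mul_sum]
    refine sum_congr rfl fun k _ => ?_
    rw [show k + 1 - (b + 1) = k - b by omega, pow_succ, ← add_assoc]
    ring

def ascFactor (z : R) (x y : ℕ) : R := q ^ y + if y ≤ x then z else 0

def descFactor (z : R) (x y : ℕ) : R := q ^ x + if x < y then z else 0

lemma sum_ascFactor_mul_choose (z : R) {b m : ℕ} (hb : b ≤ m) (r : ℕ) :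
    ∑ a ∈ range (m + 1), ascFactor q z b a * ((a + r).choose r : R)
      = ∑ a ∈ range (m + 1), ((a + r).choose r : R) * q ^ a
        + z * ((b + (r + 1)).choose (r + 1) : R) := by
  have hle : {a ∈ range (m + 1) | a ≤ b} = range (b + 1) := by
    ext a; simp only [mem_filter, mem_range]; omega
  simp only [ascFactor, add_mul, sum_add_distrib, ite_mul, zero_mul]
  rw [← sum_filter, hle, ← mul_sum, ← Nat.cast_sum, Nat.sum_range_add_choose, ← add_assoc]
  exact congrArg (· + _) (sum_congr rfl fun a _ => mul_comm _ _)

lemma sum_descFactor_mul_descTest (z : R) (r b m : ℕ) :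
    ∑ a ∈ range (m + 1), descFactor q z b a * descTest q r (m + 1) a
      = (∑ a ∈ range (m + 1), ((a + r).choose r : R) * q ^ a) * q ^ b
        + z * q * descTest q (r + 1) m b := by
  have hlt : {a ∈ range (m + 1) | b < a} = Ioc b m := by
    ext a; simp only [mem_filter, mem_range, mem_Ioc]; omega
  simp only [descFactor, add_mul, sum_add_distrib, ite_mul, zero_mul]
  rw [← mul_sum, sum_range_descTest, ← sum_filter, hlt, ← mul_sum, sum_Ioc_descTest,
    mul_assoc]
  ring

end Claim

theorem codeSum_ascFactor_eq_descFactor {R : Type*} [CommSemiring R] (q z : R) {m : ℕ}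
    (hm : 1 ≤ m) (r : ℕ) :
    codeSum (ascFactor q (z * q)) m (fun b => ((b + r).choose r : R))
      = codeSum (descFactor q z) m (descTest q r m) := by
  induction m, hm using Nat.le_induction generalizing r with
  | base => cases r <;> simp [codeSum_one, descTest]
  | succ m hm ih =>
    set S := ∑ a ∈ range (m + 1), ((a + r).choose r : R) * q ^ a
    rw [codeSum_succ _ hm, codeSum_succ _ hm]
    calc codeSum (ascFactor q (z * q)) m
          (fun b => ∑ a ∈ range (m + 1), ascFactor q (z * q) b a * ((a + r).choose r : R))
        = codeSum (ascFactor q (z * q)) m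
          (fun b => S * ((b + 0).choose 0 : R) + z * q * ((b + (r + 1)).choose (r + 1) : R)) :=
          codeSum_congr _ fun b hb => by
            rw [sum_ascFactor_mul_choose q _ hb, Nat.choose_zero_right, Nat.cast_one, mul_one]
      _ = S * codeSum (descFactor q z) m (descTest q 0 m)
          + z * q * codeSum (descFactor q z) m (descTest q (r + 1) m) := by
          rw [codeSum_add_mul, ih 0, ih (r + 1)]
      _ = codeSum (descFactor q z) m
          (fun b => ∑ a ∈ range (m + 1), descFactor q z b a * descTest q r (m + 1) a) := by
          rw [← codeSum_add_mul]
          refine codeSum_congr _ fun b _ => ?_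
          rw [sum_descFactor_mul_descTest, descTest, mul_comm S]

lemma Icc_one_sub_one_eq_Ico (n : ℕ) : Icc 1 (n - 1) = Ico 1 n := by
  ext
  simp only [mem_Icc, mem_Ico]
  omega

section Field

variable {K : Type*} [Field K] {q : K} (z : K) {n : ℕ} (σ : Perm (Fin n))

lemma pow_invNum_mul_prod_ascSet (hq : q ≠ 0) :
    q ^ invNum σ * ∏ i ∈ AscSet σ, (1 + z * (q ^ invEnd σ (i + 1))⁻¹)
      = codeWeight (ascFactor q z) σ := by
  rw [AscSet, Icc_one_sub_one_eq_Ico, prod_filter, invNum_eq_sum_Ico_invEnd_succ,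
    ← prod_pow_eq_pow_sum, ← prod_mul_distrib]
  refine prod_congr rfl fun i hi => ?_
  rw [mem_Ico] at hi
  simp only [ascFactor, invEnd_succ_le_iff hi.1 hi.2]
  split_ifs
  · field_simp
  · simp

lemma pow_invNum_mul_prod_desSet (hq : q ≠ 0) (hn : 1 ≤ n) :
    q ^ invNum σ * ∏ i ∈ DesSet σ, (1 + z * (q ^ (1 + invEnd σ i))⁻¹)
      = q ^ invEnd σ n * codeWeight (descFactor q (z * q⁻¹)) σ := by
  rw [DesSet, Icc_one_sub_one_eq_Ico, prod_filter, invNum_eq_sum_Ico_invEnd_add hn, pow_add,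
    ← prod_pow_eq_pow_sum, mul_right_comm, mul_comm, ← prod_mul_distrib]
  refine congrArg _ (prod_congr rfl fun i hi => ?_)
  rw [mem_Ico] at hi
  simp only [descFactor, invEnd_lt_succ_iff hi.1 hi.2]
  split_ifs
  · field_simp
    ring
  · simp

end Field

/-- For a field K, q ≠ 0, z ∈ K and n ≥ 1,
Σ_{σ∈𝔖_n} q^{inv(σ)} Π_{i∈Asc(σ)} (1 + z q^{−inv^{□,i+1}(σ)})
  = Σ_{σ∈𝔖_n} q^{inv(σ)} Π_{i∈Des(σ)} (1 + z q^{−(1+inv^{□,i}(σ))}). -/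
theorem statement5 {K : Type*} [Field K] (q z : K) (hq : q ≠ 0) (n : ℕ) (hn : 1 ≤ n) :
    ∑ σ : Equiv.Perm (Fin n),
        q ^ invNum σ * ∏ i ∈ AscSet σ, (1 + z * (q ^ invEnd σ (i + 1))⁻¹) =
      ∑ σ : Equiv.Perm (Fin n),
        q ^ invNum σ * ∏ i ∈ DesSet σ, (1 + z * (q ^ (1 + invEnd σ i))⁻¹) := by
  have key := codeSum_ascFactor_eq_descFactor q (z * q⁻¹) hn 0
  rw [inv_mul_cancel_right₀ hq] at key
  simp only [codeSum, Nat.choose_zero_right, Nat.cast_one, one_mul, descTest] at key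
  simp only [pow_invNum_mul_prod_ascSet _ _ hq, pow_invNum_mul_prod_desSet _ _ hq hn, key]
end
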